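/- Let X be a pre-Riesz space and let P : X → X be a linear projection (P ∘ P = P). Then the following assertions are equivalent: (i) P is a band projection; (ii) ker P = (PX)^⊥; (iii) PX = (ker P)^⊥; (iv) every element of PX is disjoint to every element of ker P; (v) both P and I − P are positive operators. -/

import Mathlib

open Pointwise

/-- The ordered-scalar-multiplication class of the older Mathlib (removed since). -/
class OrderedSMul (R M : Type*) [Semiring R] [PartialOrder R] [AddCommMonoid M] [PartialOrder M]
    [SMulWithZero R M] : Prop where
  protected smul_lt_smul_of_pos : ∀ {a b : M}, ∀ {c : R}, a < b → 0 < c → c • a < c • b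
  protected lt_of_smul_lt_smul_of_pos : ∀ {a b : M}, ∀ {c : R}, c • a < c • b → 0 < c → a < b

variable {X : Type*} [AddCommGroup X] [PartialOrder X] [IsOrderedAddMonoid X] [Module ℝ X] [OrderedSMul ℝ X]

/-- Two elements of an ordered vector space are disjoint if the sets `{x+y, -x-y}` and
`{x-y, y-x}` have the same set of upper bounds. -/
def UDisjoint (x y : X) : Prop :=
  upperBounds ({x + y, -x - y} : Set X) = upperBounds ({x - y, y - x} : Set X)

/-- The disjoint complement `S^⊥` of a set `S`. -/
def dComp (S : Set X) : Set X := {x : X | ∀ s ∈ S, UDisjoint x s}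

/-- A band: a set equal to its double disjoint complement. -/
def IsBand (B : Set X) : Prop := B = dComp (dComp B)

/-- A projection band: a band `B` with `B ∩ B^⊥ = {0}` and `B + B^⊥ = X`. -/
def IsProjBand (B : Set X) : Prop :=
  IsBand B ∧ B ∩ dComp B = {0} ∧ ∀ x : X, ∃ b ∈ B, ∃ c ∈ dComp B, x = b + c

/-- A positive linear operator. -/
def IsPosMap (T : X →ₗ[ℝ] X) : Prop := ∀ x : X, 0 ≤ x → 0 ≤ T x

/-- A band projection: a linear projection whose range is a projection band and whose
kernel is the disjoint complement of the range. -/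
def IsBandProj (P : X →ₗ[ℝ] X) : Prop :=
  P ∘ₗ P = P ∧ IsProjBand (Set.range ⇑P) ∧ (LinearMap.ker P : Set X) = dComp (Set.range ⇑P)

/-- A pre-Riesz space: for every nonempty finite `A ⊆ X` and every `x`, if the upper bounds
of `x + A` are contained in the upper bounds of `A`, then `x ≥ 0`. -/
def IsPreRiesz (X : Type*) [AddCommGroup X] [PartialOrder X] [IsOrderedAddMonoid X] [Module ℝ X] [OrderedSMul ℝ X] : Prop :=
  ∀ (A : Set X) (x : X), A.Finite → A.Nonempty →
    upperBounds ((x + ·) '' A) ⊆ upperBounds A → 0 ≤ x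

/-!
If `P` and `I - P` are positive, then for `x ∈ PX` and `y ∈ ker P`, `u` bounds `±(x + y)` iff
`P u` bounds `±x` and `u - P u` bounds `±y`; this is invariant under `y ↦ -y`, so `PX ⊥ ker P`.
Conversely, if `z ⊥ P z`, take an upper bound `u` of `±(z - P z)` (pre-Riesz spaces are directed):
then `(I - P) u` bounds `±(z - P z)`, hence `±(z + P z)`, and applying `P` gives `±2 P z ≤ 0`.
So `ker P = (PX)^⊥`, and the same applied to `I - P` gives `PX = (ker P)^⊥`. Finally, in a
pre-Riesz space `a ⊥ b` and `0 ≤ a + b` force `0 ≤ b`, which applied to `x = P x + (x - P x)`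
gives the positivity of `P` and `I - P` from `PX ⊥ ker P`.
-/

omit [IsOrderedAddMonoid X] [Module ℝ X] [OrderedSMul ℝ X] in
theorem uDisjoint_iff {x y : X} :
    UDisjoint x y ↔ ∀ u, (x + y ≤ u ∧ -x - y ≤ u ↔ x - y ≤ u ∧ y - x ≤ u) := by
  simp only [UDisjoint, Set.ext_iff, upperBounds_insert, upperBounds_singleton, Set.mem_inter_iff,
    Set.mem_Ici]

omit [IsOrderedAddMonoid X] [Module ℝ X] [OrderedSMul ℝ X] in
theorem UDisjoint.symm {x y : X} (h : UDisjoint x y) : UDisjoint y x := by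
  rw [uDisjoint_iff] at h ⊢
  intro u
  rw [add_comm, neg_sub_comm]
  exact (h u).trans and_comm

namespace IsPreRiesz

theorem isDirectedOrder (hX : IsPreRiesz X) : IsDirectedOrder X := by
  refine ⟨fun x y => ?_⟩
  by_contra! hxy
  -- `{x, y}` has no upper bound, hence neither has any translate of it, so every `z` is `≥ 0`.
  have hpos (z : X) : 0 ≤ z := by
    refine hX {x, y} z (Set.toFinite _) (Set.insert_nonempty _ _) fun v hv => ?_
    simp only [Set.image_insert_eq, Set.image_singleton, upperBounds_insert, upperBounds_singleton,
      Set.mem_inter_iff, Set.mem_Ici] at hv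
    exact absurd (le_sub_iff_add_le'.mpr hv.2) (hxy _ (le_sub_iff_add_le'.mpr hv.1))
  exact hxy 0 (neg_nonneg.mp (hpos _)) (neg_nonneg.mp (hpos _))

theorem nonneg_of_le_of_neg_le (hX : IsPreRiesz X) {b w : X} (hb : b ≤ w) (hb' : -b ≤ w) :
    0 ≤ w := by
  refine hX {b, -b, 0} w (Set.toFinite _) (Set.insert_nonempty _ _) fun t ht => ?_
  simp only [Set.image_insert_eq, Set.image_singleton, upperBounds_insert, upperBounds_singleton,
    Set.mem_inter_iff, Set.mem_Ici, add_zero] at ht ⊢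
  obtain ⟨hwb, -, hwt⟩ := ht
  refine ⟨hb.trans hwt, hb'.trans hwt, ?_⟩
  calc (0 : X) = -b + b := (neg_add_cancel b).symm
    _ ≤ w + b := add_le_add_left hb' b
    _ ≤ t := hwb

theorem le_of_add_le_of_sub_le (hX : IsPreRiesz X) {c d u : X} (h₁ : c + d ≤ u) (h₂ : c - d ≤ u) :
    c ≤ u :=
  sub_nonneg.mp <| hX.nonneg_of_le_of_neg_le (b := d)
    (le_sub_iff_add_le'.mpr h₁) (le_sub_iff_add_le'.mpr (by rwa [← sub_eq_add_neg]))

theorem nonneg_right_of_uDisjoint (hX : IsPreRiesz X) {a b : X} (hd : UDisjoint a b)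
    (hab : 0 ≤ a + b) : 0 ≤ b := by
  refine hX {a + b, 0} b (Set.toFinite _) (Set.insert_nonempty _ _) fun u hu => ?_
  simp only [Set.image_insert_eq, Set.image_singleton, upperBounds_insert, upperBounds_singleton,
    Set.mem_inter_iff, Set.mem_Ici, add_zero] at hu ⊢
  -- `u - b` bounds `±(a + b)`, hence by disjointness also `±(a - b)`, hence `a` and `-b`.
  have h₁ : a + b ≤ u - b := le_sub_iff_add_le.mpr (by rw [add_right_comm, add_comm]; exact hu.1)
  have h₂ : -a - b ≤ u - b := by
    rw [← neg_add']; exact (neg_nonpos.mpr hab).trans (hab.trans h₁)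
  obtain ⟨h₃, h₄⟩ := (uDisjoint_iff.mp hd (u - b)).mp ⟨h₁, h₂⟩
  have ha : a ≤ u - b := hX.le_of_add_le_of_sub_le h₁ h₃
  have hb : -b ≤ u - b := hX.le_of_add_le_of_sub_le (d := a) (by rwa [neg_add_eq_sub])
    (by rwa [sub_eq_add_neg, add_comm, ← sub_eq_add_neg])
  exact ⟨by rwa [le_sub_iff_add_le] at ha, by rwa [le_sub_iff_add_le, neg_add_cancel] at hb⟩

end IsPreRiesz

section Positive

omit [OrderedSMul ℝ X]

theorem IsPosMap.monotone {T : X →ₗ[ℝ] X} (hT : IsPosMap T) : Monotone T := fun x y hxy =>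
  sub_nonneg.mp (by simpa only [map_sub] using hT _ (sub_nonneg.mpr hxy))

variable {P : X →ₗ[ℝ] X}

theorem add_le_and_neg_sub_le_iff (hP : IsPosMap P) (hQ : IsPosMap (LinearMap.id - P))
    {x y : X} (hx : P x = x) (hy : P y = 0) (u : X) :
    (x + y ≤ u ∧ -x - y ≤ u) ↔ (x ≤ P u ∧ -x ≤ P u) ∧ (y ≤ u - P u ∧ -y ≤ u - P u) := by
  have hQmono := hQ.monotone
  simp only [Monotone, LinearMap.sub_apply, LinearMap.id_apply] at hQmono
  constructor
  · rintro ⟨h₁, h₂⟩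
    have h₁P := hP.monotone h₁
    have h₂P := hP.monotone h₂
    have h₁Q := hQmono h₁
    have h₂Q := hQmono h₂
    simp only [map_add, map_sub, map_neg, hx, hy] at h₁P h₂P h₁Q h₂Q
    refine ⟨⟨by simpa using h₁P, by simpa using h₂P⟩, by simpa using h₁Q, ?_⟩
    convert h₂Q using 1; abel
  · rintro ⟨⟨hxu, hxu'⟩, hyu, hyu'⟩
    constructor
    · simpa using add_le_add hxu hyu
    · simpa [sub_eq_add_neg] using add_le_add hxu' hyu'

theorem uDisjoint_of_map_eq_self_of_map_eq_zero (hP : IsPosMap P)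
    (hQ : IsPosMap (LinearMap.id - P)) {x y : X} (hx : P x = x) (hy : P y = 0) :
    UDisjoint x y := by
  have hy' : P (-y) = 0 := by rw [map_neg, hy, neg_zero]
  refine uDisjoint_iff.mpr fun u => ?_
  rw [sub_eq_add_neg x y, ← neg_sub_neg x y, add_le_and_neg_sub_le_iff hP hQ hx hy,
    add_le_and_neg_sub_le_iff hP hQ hx hy', neg_neg, and_comm (a := y ≤ u - P u)]

end Positive

theorem apply_apply_of_isIdempotentElem {R M : Type*} [Semiring R] [AddCommMonoid M] [Module R M]
    {P : M →ₗ[R] M} (hP : IsIdempotentElem P) (x : M) : P (P x) = P x :=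
  LinearMap.congr_fun hP x

theorem ker_eq_dComp_range (hX : IsPreRiesz X) {P : X →ₗ[ℝ] X} (hPP : IsIdempotentElem P)
    (hP : IsPosMap P) (hQ : IsPosMap (LinearMap.id - P)) :
    (LinearMap.ker P : Set X) = dComp (Set.range P) := by
  have hidem := apply_apply_of_isIdempotentElem hPP
  ext z
  refine ⟨fun hz => ?_, fun hz => ?_⟩
  · rintro _ ⟨a, rfl⟩
    exact (uDisjoint_of_map_eq_self_of_map_eq_zero hP hQ (hidem a) hz).symm
  -- With `u` bounding `±(z - P z)`, `v = u - P u` does too; by `z ⊥ P z` it bounds `±(z + P z)`,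
  -- and applying `P` gives `±(P z + P z) ≤ P v = 0`.
  have := hX.isDirectedOrder
  obtain ⟨u, hu, hu'⟩ := exists_ge_ge (z - P z) (P z - z)
  have hQmono := hQ.monotone
  simp only [Monotone, LinearMap.sub_apply, LinearMap.id_apply] at hQmono
  have hv : z - P z ≤ u - P u ∧ P z - z ≤ u - P u := by
    refine ⟨(hQmono hu).trans_eq' ?_, (hQmono hu').trans_eq' ?_⟩ <;>
      simp only [map_sub, hidem] <;> abel
  obtain ⟨h₁, h₂⟩ := (uDisjoint_iff.mp (hz (P z) ⟨z, rfl⟩) (u - P u)).mpr hv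
  have h₁P := hP.monotone h₁
  have h₂P := hP.monotone h₂
  simp only [map_add, map_sub, map_neg, hidem, sub_self] at h₁P h₂P
  have h2z : P z + P z = 0 := le_antisymm h₁P (by simpa [neg_le_iff_add_nonneg] using h₂P)
  rw [← two_smul ℝ, smul_eq_zero] at h2z
  exact h2z.resolve_left two_ne_zero

theorem range_eq_dComp_ker (hX : IsPreRiesz X) {P : X →ₗ[ℝ] X} (hPP : IsIdempotentElem P)
    (hP : IsPosMap P) (hQ : IsPosMap (LinearMap.id - P)) :
    Set.range P = dComp (LinearMap.ker P : Set X) := by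
  have hQQ : IsIdempotentElem (LinearMap.id - P) := hPP.one_sub
  have key := ker_eq_dComp_range hX hQQ hQ (by rwa [sub_sub_cancel])
  rwa [← LinearMap.coe_range, ← LinearMap.IsIdempotentElem.range_eq_ker hPP,
    ← LinearMap.IsIdempotentElem.ker_eq_range hPP, LinearMap.coe_range] at key

theorem isBandProj_of_isPosMap (hX : IsPreRiesz X) {P : X →ₗ[ℝ] X} (hPP : IsIdempotentElem P)
    (hP : IsPosMap P) (hQ : IsPosMap (LinearMap.id - P)) : IsBandProj P := by
  have hker := ker_eq_dComp_range hX hPP hP hQ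
  have hidem := apply_apply_of_isIdempotentElem hPP
  refine ⟨hPP, ⟨?_, ?_, fun x => ⟨P x, ⟨x, rfl⟩, x - P x, ?_, (add_sub_cancel _ _).symm⟩⟩, hker⟩
  · rw [IsBand, ← hker]
    exact range_eq_dComp_ker hX hPP hP hQ
  · rw [← hker, ← LinearMap.coe_range, ← Submodule.coe_inf,
      (LinearMap.IsIdempotentElem.isCompl hPP).inf_eq_bot, Submodule.bot_coe]
  · rw [← hker]
    simp [hidem]

/-- Characterisations of band projections among linear projections. -/
theorem stmt_3 (hX : IsPreRiesz X) (P : X →ₗ[ℝ] X) (hP : P ∘ₗ P = P) :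
    [IsBandProj P,
     (LinearMap.ker P : Set X) = dComp (Set.range ⇑P),
     Set.range ⇑P = dComp (LinearMap.ker P : Set X),
     ∀ x ∈ Set.range ⇑P, ∀ y ∈ (LinearMap.ker P : Set X), UDisjoint x y,
     IsPosMap P ∧ IsPosMap ((LinearMap.id : X →ₗ[ℝ] X) - P)].TFAE := by
  have hPP : IsIdempotentElem P := hP
  tfae_have 1 → 2 := fun h => h.2.2
  tfae_have 2 → 4 := fun h x hx y hy => ((h ▸ hy : y ∈ dComp _) x hx).symm
  tfae_have 3 → 4 := fun h x hx y hy => (h ▸ hx : x ∈ dComp _) y hy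
  tfae_have 4 → 5 := by
    intro h
    have hd (x : X) : UDisjoint (P x) (x - P x) :=
      h _ ⟨x, rfl⟩ _ (by simp [apply_apply_of_isIdempotentElem hPP])
    refine ⟨fun x hx => hX.nonneg_right_of_uDisjoint (hd x).symm (by rwa [sub_add_cancel]),
      fun x hx => (hX.nonneg_right_of_uDisjoint (hd x) (by rwa [add_sub_cancel]) : 0 ≤ x - P x)⟩
  tfae_have 5 → 1 := fun h => isBandProj_of_isPosMap hX hPP h.1 h.2
  tfae_have 5 → 3 := fun h => range_eq_dComp_ker hX hPP h.1 h.2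
  tfae_finish
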